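/- arXiv:1301.4643 — 6 statements merged into one kernel-verified Lean document; each statement's English description precedes it below -/
import Mathlib

section
/- Construction of constant-rank codes: Let M be a constant-dimension code in the Grassmannian of r-dimensional subspaces of F_q^m with minimum subspace distance d_{S,M}, and N a constant-dimension code of r-dimensional subspaces of F_q^n with minimum subspace distance d_{S,N}, with r ≤ min{m,n}. Then there exists a set C of m×n matrices over F_q, all of rank exactly r, with |C| = min{|M|,|N|}, whose column spaces belong to M, whose row spaces belong to N, and whose pairwise rank distances satisfy rk(A−B) ≥ (1/2)·d_{S,M} + (1/2)·d_{S,N} for all distinct A, B ∈ C. -/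
open Matrix

/-- The subspace distance `d_S(U,V) = dim(U+V) - dim(U ∩ V)`. -/
noncomputable def subspaceDist {F : Type*} [Field F] {M : Type*} [AddCommGroup M] [Module F M]
    (U V : Submodule F M) : ℕ :=
  Module.finrank F ↥(U ⊔ V) - Module.finrank F ↥(U ⊓ V)

/-- The row space of a matrix: the span of its rows. -/
noncomputable def rowSpace {F : Type*} [Field F] {m : ℕ} {ι : Type*}
    (X : Matrix (Fin m) ι F) : Submodule F (ι → F) :=
  Submodule.span F (Set.range fun i => X i)

/-- The column space of a matrix: the span of its columns. -/
noncomputable def colSpace {F : Type*} [Field F] {m n : ℕ}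
    (X : Matrix (Fin m) (Fin n) F) : Submodule F (Fin m → F) :=
  rowSpace Xᵀ

/-!
For matrices (or linear maps) `A`, `B` one has `range A + range B = range (A - B) + range B`, and
`B` maps `ker A` into `range (A - B) ∩ range B`. Counting dimensions gives
`dim (col A + col B) + dim (row A + row B) ≤ rk (A - B) + rk A + rk B`, that is
`d_S (col A, col B) + d_S (row A, row B) ≤ 2 rk (A - B)`. The code pairs `min {|M|, |N|}` distinct
members `U` of `M` with distinct members `V` of `N` and takes for each pair the product of a
matrix whose columns form a basis of `U` with one whose rows form a basis of `V`.
-/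

open Module LinearMap Submodule

section LinearMap

variable {K V W : Type*} [Field K] [AddCommGroup V] [Module K V] [AddCommGroup W] [Module K W]

theorem Submodule.finrank_map_add_finrank_inf_ker (g : V →ₗ[K] W) (p : Submodule K V)
    [FiniteDimensional K p] :
    finrank K (p.map g) + finrank K ↥(p ⊓ ker g) = finrank K p := by
  have h := (g.domRestrict p).finrank_range_add_finrank_ker
  rwa [range_domRestrict, ker_domRestrict, ← finrank_map_subtype_eq, map_comap_subtype] at h

theorem LinearMap.finrank_sup_range_add_le [FiniteDimensional K V] (f g : V →ₗ[K] W) :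
    finrank K ↥(range f ⊔ range g) + finrank K V ≤
      finrank K (range (f - g)) + finrank K (range f) + finrank K (range g) +
        finrank K ↥(ker f ⊓ ker g) := by
  have hsup : range (f - g) ⊔ range g = range f ⊔ range g := by
    refine le_antisymm (sup_le ?_ le_sup_right) (sup_le ?_ le_sup_right)
    · simpa [sub_eq_add_neg, range_neg] using range_add_le f (-g)
    · simpa using range_add_le (f - g) g
  have hmap : (ker f).map g ≤ range (f - g) ⊓ range g := by
    rintro _ ⟨x, hx, rfl⟩
    exact ⟨⟨-x, by simp [mem_ker.1 hx]⟩, mem_range_self g x⟩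
  have hdim := finrank_sup_add_finrank_inf_eq (range (f - g)) (range g)
  rw [hsup] at hdim
  have := Submodule.finrank_mono hmap
  have := (ker f).finrank_map_add_finrank_inf_ker g
  have := f.finrank_range_add_finrank_ker
  omega

end LinearMap

theorem subspaceDist_add_finrank_add_finrank {K V : Type*} [Field K] [AddCommGroup V]
    [Module K V] (U U' : Submodule K V) [FiniteDimensional K U] [FiniteDimensional K U'] :
    subspaceDist U U' + finrank K U + finrank K U' = 2 * finrank K ↥(U ⊔ U') := by
  have hle : finrank K ↥(U ⊓ U') ≤ finrank K ↥(U ⊔ U') :=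
    Submodule.finrank_mono (inf_le_left.trans le_sup_left)
  have := finrank_sup_add_finrank_inf_eq U U'
  rw [subspaceDist]
  omega

section Matrix

variable {F : Type*} [Field F] {m n r : ℕ}

theorem rowSpace_eq_span_row {ι : Type*} (A : Matrix (Fin m) ι F) :
    rowSpace A = span F (Set.range A.row) := rfl

theorem rowSpace_eq_colSpace_transpose (A : Matrix (Fin m) (Fin n) F) :
    rowSpace A = colSpace Aᵀ := by
  rw [colSpace, transpose_transpose]

theorem colSpace_eq_range_mulVecLin (A : Matrix (Fin m) (Fin n) F) :
    colSpace A = range A.mulVecLin := by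
  rw [Matrix.range_mulVecLin]
  rfl

theorem finrank_colSpace (A : Matrix (Fin m) (Fin n) F) : finrank F (colSpace A) = A.rank := by
  rw [colSpace_eq_range_mulVecLin, Matrix.rank]

theorem finrank_rowSpace (A : Matrix (Fin m) (Fin n) F) : finrank F (rowSpace A) = A.rank := by
  rw [rowSpace_eq_span_row, Matrix.rank_eq_finrank_span_row]

theorem finrank_rowSpace_sup_add_finrank_ker_inf (A B : Matrix (Fin m) (Fin n) F) :
    finrank F ↥(rowSpace A ⊔ rowSpace B) + finrank F ↥(ker A.mulVecLin ⊓ ker B.mulVecLin) = n := by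
  have hrow : rowSpace A ⊔ rowSpace B = span F (Set.range (fromRows A B).row) := by
    rw [rowSpace_eq_span_row, rowSpace_eq_span_row, ← span_union]
    exact congrArg (span F) (Set.Sum.elim_range A B).symm
  have hker : ker A.mulVecLin ⊓ ker B.mulVecLin = ker (fromRows A B).mulVecLin := by
    ext v
    simp [funext_iff, Sum.forall]
  have := (fromRows A B).mulVecLin.finrank_range_add_finrank_ker
  rwa [← Matrix.rank, rank_eq_finrank_span_row, ← hrow, ← hker, finrank_fin_fun] at this

theorem finrank_colSpace_sup_add_finrank_rowSpace_sup_le (A B : Matrix (Fin m) (Fin n) F) :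
    finrank F ↥(colSpace A ⊔ colSpace B) + finrank F ↥(rowSpace A ⊔ rowSpace B) ≤
      (A - B).rank + A.rank + B.rank := by
  have hsub : (A - B).mulVecLin = A.mulVecLin - B.mulVecLin := by
    ext
    simp
  have hmaps := A.mulVecLin.finrank_sup_range_add_le B.mulVecLin
  rw [← hsub, finrank_fin_fun] at hmaps
  have hrows := finrank_rowSpace_sup_add_finrank_ker_inf A B
  rw [colSpace_eq_range_mulVecLin, colSpace_eq_range_mulVecLin, Matrix.rank, Matrix.rank,
    Matrix.rank]
  omega

theorem subspaceDist_colSpace_add_subspaceDist_rowSpace_le (A B : Matrix (Fin m) (Fin n) F) :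
    subspaceDist (colSpace A) (colSpace B) + subspaceDist (rowSpace A) (rowSpace B) ≤
      2 * (A - B).rank := by
  have := subspaceDist_add_finrank_add_finrank (colSpace A) (colSpace B)
  have := subspaceDist_add_finrank_add_finrank (rowSpace A) (rowSpace B)
  have := finrank_colSpace_sup_add_finrank_rowSpace_sup_le A B
  simp only [finrank_colSpace, finrank_rowSpace] at *
  omega

theorem exists_colSpace_eq {U : Submodule F (Fin m → F)} (hU : finrank F U = r) :
    ∃ X : Matrix (Fin m) (Fin r) F, colSpace X = U := by
  let b := finBasisOfFinrankEq F U hU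
  refine ⟨of fun i j => (b j : Fin m → F) i, ?_⟩
  change span F (Set.range (U.subtype ∘ b)) = U
  rw [Set.range_comp, ← Submodule.map_span, b.span_eq, map_subtype_top]

theorem colSpace_mul_of_rank_eq (X : Matrix (Fin m) (Fin r) F) {Y : Matrix (Fin r) (Fin n) F}
    (hY : Y.rank = r) : colSpace (X * Y) = colSpace X := by
  have hsurj : range Y.mulVecLin = ⊤ :=
    eq_top_of_finrank_eq (by rw [← Matrix.rank, hY, finrank_fin_fun])
  rw [colSpace_eq_range_mulVecLin, colSpace_eq_range_mulVecLin, mulVecLin_mul, range_comp,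
    hsurj, Submodule.map_top]

theorem rowSpace_mul_of_rank_eq {X : Matrix (Fin m) (Fin r) F} (Y : Matrix (Fin r) (Fin n) F)
    (hX : X.rank = r) : rowSpace (X * Y) = rowSpace Y := by
  rw [rowSpace_eq_colSpace_transpose, rowSpace_eq_colSpace_transpose, transpose_mul,
    colSpace_mul_of_rank_eq _ (by rw [rank_transpose, hX])]

theorem exists_colSpace_eq_and_rowSpace_eq {U : Submodule F (Fin m → F)}
    {V : Submodule F (Fin n → F)} (hU : finrank F U = r) (hV : finrank F V = r) :
    ∃ A : Matrix (Fin m) (Fin n) F, colSpace A = U ∧ rowSpace A = V := by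
  obtain ⟨X, hX⟩ := exists_colSpace_eq hU
  obtain ⟨Y, hY⟩ := exists_colSpace_eq hV
  have hXrank : X.rank = r := by rw [← finrank_colSpace, hX, hU]
  have hYrank : Yᵀ.rank = r := by rw [rank_transpose, ← finrank_colSpace, hY, hV]
  refine ⟨X * Yᵀ, ?_, ?_⟩
  · rw [colSpace_mul_of_rank_eq X hYrank, hX]
  · rw [rowSpace_mul_of_rank_eq Yᵀ hXrank, rowSpace_eq_colSpace_transpose, transpose_transpose,
      hY]

end Matrix

theorem constant_rank_code_construction_general {F : Type*} [Field F] {m n r : ℕ}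
    (M : Finset (Submodule F (Fin m → F))) (N : Finset (Submodule F (Fin n → F)))
    (dSM dSN : ℕ)
    (hMdim : ∀ U ∈ M, Module.finrank F ↥U = r)
    (hNdim : ∀ U ∈ N, Module.finrank F ↥U = r)
    (hMdist : ∀ U ∈ M, ∀ V ∈ M, U ≠ V → dSM ≤ subspaceDist U V)
    (hNdist : ∀ U ∈ N, ∀ V ∈ N, U ≠ V → dSN ≤ subspaceDist U V) :
    ∃ C : Finset (Matrix (Fin m) (Fin n) F),
      C.card = min M.card N.card ∧
      (∀ A ∈ C, A.rank = r) ∧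
      (∀ A ∈ C, colSpace A ∈ M) ∧
      (∀ A ∈ C, rowSpace A ∈ N) ∧
      (∀ A ∈ C, ∀ B ∈ C, A ≠ B →
        (dSM : ℚ) / 2 + (dSN : ℚ) / 2 ≤ (((A - B) : Matrix (Fin m) (Fin n) F).rank : ℚ)) := by
  obtain ⟨u⟩ : Nonempty (Fin (min M.card N.card) ↪ M) :=
    Function.Embedding.nonempty_of_card_le (by simp)
  obtain ⟨v⟩ : Nonempty (Fin (min M.card N.card) ↪ N) :=
    Function.Embedding.nonempty_of_card_le (by simp)
  choose A hcol hrow using fun i =>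
    exists_colSpace_eq_and_rowSpace_eq (hMdim _ (u i).2) (hNdim _ (v i).2)
  have hA : Function.Injective A := fun i j h =>
    u.injective (Subtype.ext (by rw [← hcol i, ← hcol j, h]))
  refine ⟨Finset.univ.map ⟨A, hA⟩, by simp, ?_, ?_, ?_, ?_⟩ <;>
    simp only [Finset.mem_map, Finset.mem_univ, true_and, Function.Embedding.coeFn_mk,
      forall_exists_index, forall_apply_eq_imp_iff]
  · exact fun i => by rw [← finrank_colSpace, hcol, hMdim _ (u i).2]
  · exact fun i => hcol i ▸ (u i).2
  · exact fun i => hrow i ▸ (v i).2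
  intro i j hAij
  have hij : i ≠ j := fun h => hAij (congrArg A h)
  have hM := hMdist _ (u i).2 _ (u j).2 fun h => hij (u.injective (Subtype.ext h))
  have hN := hNdist _ (v i).2 _ (v j).2 fun h => hij (v.injective (Subtype.ext h))
  have hrank := subspaceDist_colSpace_add_subspaceDist_rowSpace_le (A i) (A j)
  rw [hcol, hcol, hrow, hrow] at hrank
  have : (dSM + dSN : ℚ) ≤ 2 * (A i - A j).rank := by exact_mod_cast (by omega)
  linarith

/-- Construction of constant-rank codes from two constant-dimension codes `M` (in `F_q^m`)
and `N` (in `F_q^n`) of dimension `r` with minimum subspace distances `d_{S,M}`, `d_{S,N}`: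
there is a set of `min{|M|,|N|}` matrices of rank exactly `r`, with column spaces in `M`,
row spaces in `N`, and pairwise rank distance at least `½ d_{S,M} + ½ d_{S,N}`. -/
theorem constant_rank_code_construction {F : Type*} [Field F] [Fintype F] {m n r : ℕ}
    (hr : r ≤ min m n)
    (M : Finset (Submodule F (Fin m → F))) (N : Finset (Submodule F (Fin n → F)))
    (dSM dSN : ℕ)
    (hMdim : ∀ U ∈ M, Module.finrank F ↥U = r)
    (hNdim : ∀ U ∈ N, Module.finrank F ↥U = r)
    (hMdist : ∀ U ∈ M, ∀ V ∈ M, U ≠ V → dSM ≤ subspaceDist U V)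
    (hNdist : ∀ U ∈ N, ∀ V ∈ N, U ≠ V → dSN ≤ subspaceDist U V) :
    ∃ C : Finset (Matrix (Fin m) (Fin n) F),
      C.card = min M.card N.card ∧
      (∀ A ∈ C, A.rank = r) ∧
      (∀ A ∈ C, colSpace A ∈ M) ∧
      (∀ A ∈ C, rowSpace A ∈ N) ∧
      (∀ A ∈ C, ∀ B ∈ C, A ≠ B →
        (dSM : ℚ) / 2 + (dSN : ℚ) / 2 ≤ (((A - B) : Matrix (Fin m) (Fin n) F).rank : ℚ)) :=
  constant_rank_code_construction_general M N dSM dSN hMdim hNdim hMdist hNdist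
end

section
/- If M = N (equal cardinalities, same codes used in the construction), then the constant-rank code C constructed from constant-dimension codes M and N additionally has minimum rank distance at most (1/2)·min{d_{S,M}, d_{S,N}} + r. -/
open Matrix
open scoped Classical

/-!
Take the two codewords whose row spaces (or column spaces, whichever code has the smaller
minimum distance) realise the minimum subspace distance `d`. Every row of `A - B` lies in
`rowSpace A + rowSpace B`, and since both summands have dimension `r`,
`dim (U + V) = (d_S(U, V) + 2r) / 2`; hence `rk (A - B) ≤ d / 2 + r`.
-/

section

variable {F : Type*} [Field F]

theorem finrank_sup_eq_subspaceDist_div_two_add {E : Type*} [AddCommGroup E] [Module F E]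
    {r : ℕ} (U V : Submodule F E) [FiniteDimensional F U] [FiniteDimensional F V]
    (hU : Module.finrank F U = r) (hV : Module.finrank F V = r) :
    (Module.finrank F ↥(U ⊔ V) : ℚ) = subspaceDist U V / 2 + r := by
  have hsum := Submodule.finrank_sup_add_finrank_inf_eq U V
  have hle : Module.finrank F ↥(U ⊓ V) ≤ Module.finrank F ↥(U ⊔ V) :=
    Submodule.finrank_mono (inf_le_left.trans le_sup_left)
  rw [subspaceDist, Nat.cast_sub hle]
  have : (Module.finrank F ↥(U ⊔ V) : ℚ) + Module.finrank F ↥(U ⊓ V) = r + r := by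
    exact_mod_cast hU ▸ hV ▸ hsum
  linarith

theorem rowSpace_sub_le {m : ℕ} {ι : Type*} (A B : Matrix (Fin m) ι F) :
    rowSpace (A - B) ≤ rowSpace A ⊔ rowSpace B :=
  Submodule.span_le.2 <| by
    rintro _ ⟨i, rfl⟩
    exact Submodule.sub_mem _ (Submodule.mem_sup_left (Submodule.subset_span ⟨i, rfl⟩))
      (Submodule.mem_sup_right (Submodule.subset_span ⟨i, rfl⟩))

variable {m n r : ℕ}

theorem rank_eq_finrank_rowSpace (A : Matrix (Fin m) (Fin n) F) :
    A.rank = Module.finrank F (rowSpace A) :=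
  A.rank_eq_finrank_span_row

theorem rank_sub_le_subspaceDist_rowSpace {A B : Matrix (Fin m) (Fin n) F}
    (hA : A.rank = r) (hB : B.rank = r) :
    ((A - B).rank : ℚ) ≤ subspaceDist (rowSpace A) (rowSpace B) / 2 + r := by
  rw [rank_eq_finrank_rowSpace] at hA hB
  rw [← finrank_sup_eq_subspaceDist_div_two_add _ _ hA hB, rank_eq_finrank_rowSpace]
  exact_mod_cast Submodule.finrank_mono (rowSpace_sub_le A B)

theorem rank_sub_le_subspaceDist_colSpace {A B : Matrix (Fin m) (Fin n) F}
    (hA : A.rank = r) (hB : B.rank = r) :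
    ((A - B).rank : ℚ) ≤ subspaceDist (colSpace A) (colSpace B) / 2 + r := by
  rw [← rank_transpose, transpose_sub]
  exact rank_sub_le_subspaceDist_rowSpace (by rwa [rank_transpose]) (by rwa [rank_transpose])

end

theorem Finset.exists_ne_of_image_eq {α β : Type*} [DecidableEq β] {C : Finset α} {M : Finset β}
    {f : α → β} {P : β → β → Prop} (hf : C.image f = M)
    (hM : ∃ U ∈ M, ∃ V ∈ M, U ≠ V ∧ P U V) : ∃ A ∈ C, ∃ B ∈ C, A ≠ B ∧ P (f A) (f B) := by
  obtain ⟨U, hU, V, hV, hUV, hP⟩ := hM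
  obtain ⟨A, hA, rfl⟩ := Finset.mem_image.mp (hf ▸ hU)
  obtain ⟨B, hB, rfl⟩ := Finset.mem_image.mp (hf ▸ hV)
  exact ⟨A, hA, B, hB, fun h => hUV (h ▸ rfl), hP⟩

theorem constant_rank_code_min_dist_upper_general {F : Type*} [Field F] {m n r : ℕ}
    (M : Finset (Submodule F (Fin m → F))) (N : Finset (Submodule F (Fin n → F)))
    (dSM dSN : ℕ)
    (C : Finset (Matrix (Fin m) (Fin n) F))
    (hrank : ∀ A ∈ C, A.rank = r)
    (hcolIm : C.image (fun A => colSpace A) = M)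
    (hrowIm : C.image (fun A => rowSpace A) = N)
    (hMmin : ∃ U ∈ M, ∃ V ∈ M, U ≠ V ∧ subspaceDist U V = dSM)
    (hNmin : ∃ U ∈ N, ∃ V ∈ N, U ≠ V ∧ subspaceDist U V = dSN) :
    ∃ A ∈ C, ∃ B ∈ C, A ≠ B ∧
      (((A - B) : Matrix (Fin m) (Fin n) F).rank : ℚ) ≤ (min dSM dSN : ℚ) / 2 + r := by
  rcases le_total dSM dSN with hle | hle
  · obtain ⟨A, hA, B, hB, hAB, hd⟩ := Finset.exists_ne_of_image_eq hcolIm hMmin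
    refine ⟨A, hA, B, hB, hAB, ?_⟩
    calc ((A - B).rank : ℚ) ≤ subspaceDist (colSpace A) (colSpace B) / 2 + r :=
          rank_sub_le_subspaceDist_colSpace (hrank A hA) (hrank B hB)
      _ = (min dSM dSN : ℚ) / 2 + r := by rw [hd, min_eq_left (by exact_mod_cast hle)]
  · obtain ⟨A, hA, B, hB, hAB, hd⟩ := Finset.exists_ne_of_image_eq hrowIm hNmin
    refine ⟨A, hA, B, hB, hAB, ?_⟩
    calc ((A - B).rank : ℚ) ≤ subspaceDist (rowSpace A) (rowSpace B) / 2 + r :=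
          rank_sub_le_subspaceDist_rowSpace (hrank A hA) (hrank B hB)
      _ = (min dSM dSN : ℚ) / 2 + r := by rw [hd, min_eq_right (by exact_mod_cast hle)]

/-- If the two constant-dimension codes used in the constant-rank code construction have
equal cardinality (`|M| = |N|`), then the constructed constant-rank code `C` (matrices of
rank `r` whose column spaces exhaust `M` and whose row spaces exhaust `N`, injectively)
has minimum rank distance at most `½ min{d_{S,M}, d_{S,N}} + r`. -/
theorem constant_rank_code_min_dist_upper {F : Type*} [Field F] [Fintype F] {m n r : ℕ}
    (M : Finset (Submodule F (Fin m → F))) (N : Finset (Submodule F (Fin n → F)))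
    (dSM dSN : ℕ)
    (C : Finset (Matrix (Fin m) (Fin n) F))
    (hcard : M.card = N.card) (hC2 : 2 ≤ C.card)
    (hrank : ∀ A ∈ C, A.rank = r)
    (hcolInj : Set.InjOn (fun A : Matrix (Fin m) (Fin n) F => colSpace A) ↑C)
    (hcolIm : C.image (fun A => colSpace A) = M)
    (hrowInj : Set.InjOn (fun A : Matrix (Fin m) (Fin n) F => rowSpace A) ↑C)
    (hrowIm : C.image (fun A => rowSpace A) = N)
    (hMdist : ∀ U ∈ M, ∀ V ∈ M, U ≠ V → dSM ≤ subspaceDist U V)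
    (hMmin : ∃ U ∈ M, ∃ V ∈ M, U ≠ V ∧ subspaceDist U V = dSM)
    (hNdist : ∀ U ∈ N, ∀ V ∈ N, U ≠ V → dSN ≤ subspaceDist U V)
    (hNmin : ∃ U ∈ N, ∃ V ∈ N, U ≠ V ∧ subspaceDist U V = dSN) :
    ∃ A ∈ C, ∃ B ∈ C, A ≠ B ∧
      (((A - B) : Matrix (Fin m) (Fin n) F).rank : ℚ) ≤ (min dSM dSN : ℚ) / 2 + r :=
  constant_rank_code_min_dist_upper_general M N dSM dSN C hrank hcolIm hrowIm hMmin hNmin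
end

section
/- Lifting of MRD codes: Let d be even, n/2 ≥ τ ≥ d/2, and let C be a linear MRD code over F_{q^{n−τ}} of length τ, dimension τ − d/2 + 1, and minimum rank distance d/2. Then the lifting I(Cᵀ) = { Rowspace([I_τ | Cᵀ]) : C ∈ C } is a constant-dimension code of τ-dimensional subspaces of F_q^n with cardinality q^{(n−τ)(τ−d/2+1)} and minimum subspace distance d. -/
open Matrix
open scoped Classical

/-! The row space of `[I_τ | Xᵀ]` is the graph `{(a, X a)}` of `X`, a `τ`-dimensional space.
Two graphs meet exactly over `ker (X - Y)`, so their intersection has dimension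
`τ - rank (X - Y)` and their sum dimension `τ + rank (X - Y)`: the subspace distance of the
lifts is twice the rank distance of the matrices, and distinct matrices have distinct lifts. -/

section GraphMap

variable {F : Type*} [Field F] {ι κ : Type*} [Fintype ι]

def graphMap (X : Matrix κ ι F) : (ι → F) →ₗ[F] (ι ⊕ κ → F) where
  toFun a := Sum.elim a (X *ᵥ a)
  map_add' _ _ := by ext (i | k) <;> simp [mulVec_add]
  map_smul' _ _ := by ext (i | k) <;> simp [mulVec_smul]

@[simp]
lemma graphMap_apply (X : Matrix κ ι F) (a : ι → F) : graphMap X a = Sum.elim a (X *ᵥ a) :=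
  rfl

lemma graphMap_injective (X : Matrix κ ι F) : Function.Injective (graphMap X) :=
  fun _ _ h => funext fun i => congrFun h (Sum.inl i)

lemma finrank_range_graphMap (X : Matrix κ ι F) :
    Module.finrank F (LinearMap.range (graphMap X)) = Fintype.card ι := by
  rw [LinearMap.finrank_range_of_inj (graphMap_injective X), Module.finrank_fintype_fun_eq_card]

lemma range_graphMap_inf_range_graphMap (X Y : Matrix κ ι F) :
    LinearMap.range (graphMap X) ⊓ LinearMap.range (graphMap Y)
      = (LinearMap.ker (X - Y).mulVecLin).map (graphMap X) := by
  ext v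
  simp only [Submodule.mem_inf, LinearMap.mem_range, Submodule.mem_map, LinearMap.mem_ker,
    mulVecLin_apply, sub_mulVec, sub_eq_zero]
  constructor
  · rintro ⟨⟨a, rfl⟩, b, hb⟩
    have hba : b = a := funext fun i => congrFun hb (Sum.inl i)
    subst hba
    exact ⟨b, funext fun k => (congrFun hb (Sum.inr k)).symm, rfl⟩
  · rintro ⟨a, ha, rfl⟩
    exact ⟨⟨a, rfl⟩, a, by rw [graphMap_apply, graphMap_apply, ha]⟩

lemma finrank_range_graphMap_inf (X Y : Matrix κ ι F) :
    Module.finrank F ↥(LinearMap.range (graphMap X) ⊓ LinearMap.range (graphMap Y))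
      = Fintype.card ι - (X - Y).rank := by
  rw [range_graphMap_inf_range_graphMap,
    ← (Submodule.equivMapOfInjective _ (graphMap_injective X) _).finrank_eq]
  have := LinearMap.finrank_range_add_finrank_ker (X - Y).mulVecLin
  rw [Module.finrank_fintype_fun_eq_card] at this
  rw [Matrix.rank]
  omega

lemma range_graphMap_injective :
    Function.Injective fun X : Matrix κ ι F => LinearMap.range (graphMap X) := by
  intro X Y h
  have hker : LinearMap.ker (X - Y).mulVecLin = ⊤ := by
    apply Submodule.map_injective_of_injective (graphMap_injective X)
    rw [← range_graphMap_inf_range_graphMap, ← LinearMap.range_eq_map]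
    exact inf_eq_left.mpr h.le
  rw [LinearMap.ker_eq_top, ← toLin'_apply', ← map_zero toLin'] at hker
  exact sub_eq_zero.mp (toLin'.injective hker)

lemma subspaceDist_range_graphMap (X Y : Matrix κ ι F) :
    subspaceDist (LinearMap.range (graphMap X)) (LinearMap.range (graphMap Y))
      = 2 * (X - Y).rank := by
  have hsup := Submodule.finrank_sup_add_finrank_inf_eq
    (LinearMap.range (graphMap X)) (LinearMap.range (graphMap Y))
  have hrank := (X - Y).rank_le_card_width
  rw [finrank_range_graphMap_inf, finrank_range_graphMap, finrank_range_graphMap] at hsup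
  rw [subspaceDist, finrank_range_graphMap_inf]
  omega

lemma rowSpace_fromCols_one_transpose {τ : ℕ} (X : Matrix κ (Fin τ) F) :
    rowSpace (fromCols (1 : Matrix (Fin τ) (Fin τ) F) Xᵀ) = LinearMap.range (graphMap X) := by
  have hgraph : graphMap X = (fromCols (1 : Matrix (Fin τ) (Fin τ) F) Xᵀ).vecMulLinear :=
    LinearMap.ext fun a => by
      rw [graphMap_apply, vecMulLinear_apply, vecMul_fromCols, vecMul_one, vecMul_transpose]
  rw [hgraph, range_vecMulLinear]
  rfl

end GraphMap

theorem lifted_MRD_code_general {F : Type*} [Field F] [Fintype F] {n τ d : ℕ}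
    (hd : Even d)
    (C : Finset (Matrix (Fin (n - τ)) (Fin τ) F))
    (hcard : C.card = (Fintype.card F) ^ ((n - τ) * (τ - d / 2 + 1)))
    (hdist : ∀ X ∈ C, ∀ Y ∈ C, X ≠ Y → d / 2 ≤ ((X - Y) : Matrix (Fin (n - τ)) (Fin τ) F).rank)
    (hmin : ∃ X ∈ C, ∃ Y ∈ C, X ≠ Y ∧ ((X - Y) : Matrix (Fin (n - τ)) (Fin τ) F).rank = d / 2) :
    (C.image (fun X => rowSpace (Matrix.fromCols (1 : Matrix (Fin τ) (Fin τ) F) Xᵀ))).card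
        = (Fintype.card F) ^ ((n - τ) * (τ - d / 2 + 1)) ∧
    (∀ U ∈ C.image (fun X => rowSpace (Matrix.fromCols (1 : Matrix (Fin τ) (Fin τ) F) Xᵀ)),
        Module.finrank F ↥U = τ) ∧
    (∀ U ∈ C.image (fun X => rowSpace (Matrix.fromCols (1 : Matrix (Fin τ) (Fin τ) F) Xᵀ)),
      ∀ V ∈ C.image (fun X => rowSpace (Matrix.fromCols (1 : Matrix (Fin τ) (Fin τ) F) Xᵀ)),
        U ≠ V → d ≤ subspaceDist U V) ∧
    (∃ U ∈ C.image (fun X => rowSpace (Matrix.fromCols (1 : Matrix (Fin τ) (Fin τ) F) Xᵀ)),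
     ∃ V ∈ C.image (fun X => rowSpace (Matrix.fromCols (1 : Matrix (Fin τ) (Fin τ) F) Xᵀ)),
        U ≠ V ∧ subspaceDist U V = d) := by
  simp only [rowSpace_fromCols_one_transpose, Finset.forall_mem_image, Finset.exists_mem_image]
  have h2d : 2 * (d / 2) = d := Nat.two_mul_div_two_of_even hd
  refine ⟨?_, fun X _ => ?_, fun X hX Y hY hne => ?_, ?_⟩
  · rw [Finset.card_image_of_injective _ range_graphMap_injective, hcard]
  · rw [finrank_range_graphMap, Fintype.card_fin]
  · have := hdist X hX Y hY (ne_of_apply_ne (fun X => LinearMap.range (graphMap X)) hne)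
    rw [subspaceDist_range_graphMap]
    omega
  · obtain ⟨X, hX, Y, hY, hne, hrank⟩ := hmin
    refine ⟨X, hX, Y, hY, range_graphMap_injective.ne hne, ?_⟩
    rw [subspaceDist_range_graphMap, hrank, h2d]

/-- Lifting of an MRD code: let `d` be even, `d/2 ≤ τ ≤ n - τ`, and let `C` be a set of
`(n-τ) × τ` matrices over `F_q` representing a linear MRD code over `F_{q^{n-τ}}` of length `τ`,
dimension `τ - d/2 + 1` (so `|C| = q^{(n-τ)(τ-d/2+1)}`) and minimum rank distance exactly `d/2`.
Then the lifting `{ Rowspace [I_τ | Cᵀ] : C ∈ C }` is a constant-dimension code of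
`τ`-dimensional subspaces of `F_q^n`, of the same cardinality `q^{(n-τ)(τ-d/2+1)}`, with
minimum subspace distance exactly `d`. -/
theorem lifted_MRD_code {F : Type*} [Field F] [Fintype F] {n τ d : ℕ}
    (hd : Even d) (hτd : d / 2 ≤ τ) (hτn : τ ≤ n - τ) (hd0 : 0 < d)
    (C : Finset (Matrix (Fin (n - τ)) (Fin τ) F))
    (hcard : C.card = (Fintype.card F) ^ ((n - τ) * (τ - d / 2 + 1)))
    (hdist : ∀ X ∈ C, ∀ Y ∈ C, X ≠ Y → d / 2 ≤ ((X - Y) : Matrix (Fin (n - τ)) (Fin τ) F).rank)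
    (hmin : ∃ X ∈ C, ∃ Y ∈ C, X ≠ Y ∧ ((X - Y) : Matrix (Fin (n - τ)) (Fin τ) F).rank = d / 2) :
    (C.image (fun X => rowSpace (Matrix.fromCols (1 : Matrix (Fin τ) (Fin τ) F) Xᵀ))).card
        = (Fintype.card F) ^ ((n - τ) * (τ - d / 2 + 1)) ∧
    (∀ U ∈ C.image (fun X => rowSpace (Matrix.fromCols (1 : Matrix (Fin τ) (Fin τ) F) Xᵀ)),
        Module.finrank F ↥U = τ) ∧
    (∀ U ∈ C.image (fun X => rowSpace (Matrix.fromCols (1 : Matrix (Fin τ) (Fin τ) F) Xᵀ)),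
      ∀ V ∈ C.image (fun X => rowSpace (Matrix.fromCols (1 : Matrix (Fin τ) (Fin τ) F) Xᵀ)),
        U ≠ V → d ≤ subspaceDist U V) ∧
    (∃ U ∈ C.image (fun X => rowSpace (Matrix.fromCols (1 : Matrix (Fin τ) (Fin τ) F) Xᵀ)),
     ∃ V ∈ C.image (fun X => rowSpace (Matrix.fromCols (1 : Matrix (Fin τ) (Fin τ) F) Xᵀ)),
        U ≠ V ∧ subspaceDist U V = d) :=
  lifted_MRD_code_general hd C hcard hdist hmin
end

section
/- Lower bound on the list size of Gabidulin codes: For the Gabidulin code Gab[n,k] over F_{q^m} with n ≤ m, minimum rank distance d = n−k+1, and any τ < d, there exists a received word r ∈ F_{q^m}^n such that the number of codewords at rank distance exactly τ from r is at least [n choose n−τ]_q / (q^m)^{n−τ−k} ≥ q^{m}·q^{τ(m+n) − τ² − md}. -/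
/-!
For an `s`-dimensional subspace `U` of `⟨α⟩`, `s = n - τ`, there is a monic `q`-linearized map
`P_U(x) = x^{q^s} + ∑_{i<s} c_i x^{q^i}` with kernel exactly `U`: the Moore matrix of a basis of
`U` is invertible, and a nonzero `q`-polynomial of `q`-degree `< s` has fewer than `q^s` roots.
By rank–nullity `P_U(α)` has rank `n - s = τ`. The coefficients `c_k, …, c_{s-1}` take at most
`(q^m)^{s-k}` values, so some value `g` is shared by at least `[n choose s]_q / (q^m)^{s-k}`
subspaces. For `r = (α_j^{q^s} + ∑_i g_i α_j^{q^{k+i}})_j` each such `U` gives the codeword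
`r - P_U(α)` (evaluation of `-(c_0, …, c_{k-1})`) at distance `τ` from `r`, and different `U` give
different codewords because `P_U` on `⟨α⟩` determines its kernel `U`. The Gaussian binomial is
counted as the number of linearly independent `s`-tuples divided by the number of bases of
`F_q^s`, and it is at least `q^{τ s}`.
-/

/-- The rank of a vector `v ∈ L^n` over the base field `Fq` (where `L/Fq` is a field
extension): the `Fq`-dimension of the span of its entries, i.e. the rank of its matrix
representation. -/
noncomputable def vrank (Fq : Type*) [Field Fq] {L : Type*} [Field L] [Algebra Fq L]
    {n : ℕ} (v : Fin n → L) : ℕ :=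
  Module.finrank Fq (Submodule.span Fq (Set.range v))

/-- The Gabidulin codeword obtained by evaluating the `q`-linearized polynomial with
coefficients `f` at the points `α`. -/
def gabCodeword (q : ℕ) {L : Type*} [Field L] {n k : ℕ} (α : Fin n → L) (f : Fin k → L) :
    Fin n → L :=
  fun j => ∑ i : Fin k, f i * α j ^ q ^ (i : ℕ)

open Module Polynomial

section Linearized

variable (Fq : Type*) {L : Type*} [Field Fq] [Fintype Fq] [Field L]

local notation "q" => Fintype.card Fq

noncomputable def linearizedPoly {s : ℕ} (c : Fin s → L) : L[X] :=
  ∑ i : Fin s, monomial (q ^ (i : ℕ)) (c i)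

lemma coeff_linearizedPoly_pow {s : ℕ} (c : Fin s → L) (i : Fin s) :
    (linearizedPoly Fq c).coeff (q ^ (i : ℕ)) = c i := by
  rw [linearizedPoly, finsetSum_coeff, Finset.sum_eq_single i]
  · simp
  · intro j _ hji
    rw [coeff_monomial, if_neg]
    exact fun h => hji (Fin.ext (Nat.pow_right_injective Fintype.one_lt_card h))
  · simp

lemma natDegree_linearizedPoly_le {s : ℕ} (c : Fin s → L) :
    (linearizedPoly Fq c).natDegree ≤ q ^ (s - 1) :=
  natDegree_sum_le_of_forall_le _ _ fun i _ =>
    (natDegree_monomial_le _).trans (Nat.pow_le_pow_right Fintype.card_pos (by omega))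

variable [Algebra Fq L]

noncomputable def frobPow (j : ℕ) : L →ₗ[Fq] L :=
  (FiniteField.frobeniusAlgHom Fq L).toLinearMap ^ j

lemma frobPow_apply (j : ℕ) (x : L) : frobPow Fq j x = x ^ q ^ j := by
  rw [frobPow, Module.End.pow_apply]
  exact congrFun (pow_iterate q j) x

noncomputable def linearizedMap {s : ℕ} (c : Fin s → L) : L →ₗ[Fq] L :=
  ∑ i, c i • frobPow Fq i

lemma linearizedMap_apply {s : ℕ} (c : Fin s → L) (x : L) :
    linearizedMap Fq c x = ∑ i, c i * x ^ q ^ (i : ℕ) := by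
  simp [linearizedMap, frobPow_apply]

noncomputable def monicLinearizedMap {s : ℕ} (c : Fin s → L) : L →ₗ[Fq] L :=
  frobPow Fq s + linearizedMap Fq c

lemma monicLinearizedMap_apply {s : ℕ} (c : Fin s → L) (x : L) :
    monicLinearizedMap Fq c x = x ^ q ^ s + ∑ i, c i * x ^ q ^ (i : ℕ) := by
  simp [monicLinearizedMap, frobPow_apply, linearizedMap_apply]

lemma monicLinearizedMap_eq_linearizedMap_snoc {s : ℕ} (c : Fin s → L) :
    monicLinearizedMap Fq c = linearizedMap Fq (Fin.snoc c 1 : Fin (s + 1) → L) := by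
  ext x
  simp [monicLinearizedMap_apply, linearizedMap_apply, Fin.sum_univ_castSucc, add_comm]

variable {Fq}

lemma eval_linearizedPoly {s : ℕ} (c : Fin s → L) (x : L) :
    (linearizedPoly Fq c).eval x = linearizedMap Fq c x := by
  simp [linearizedPoly, eval_finsetSum, linearizedMap_apply]

lemma finrank_ker_linearizedMap_lt [Finite L] {s : ℕ} {c : Fin s → L} (hc : c ≠ 0) :
    finrank Fq (LinearMap.ker (linearizedMap Fq c)) < s := by
  obtain ⟨i, hi⟩ := Function.ne_iff.mp hc
  have hP : linearizedPoly Fq c ≠ 0 := fun h => hi (by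
    simpa [h] using (coeff_linearizedPoly_pow Fq c i).symm)
  let Z : Finset L := (LinearMap.ker (linearizedMap Fq c) : Set L).toFinite.toFinset
  have hZ : Z.val ⊆ (linearizedPoly Fq c).roots := fun x hx => by
    simp_all [Z, mem_roots hP, eval_linearizedPoly]
  have hcard : q ^ finrank Fq (LinearMap.ker (linearizedMap Fq c)) ≤ q ^ (s - 1) := by
    calc q ^ finrank Fq (LinearMap.ker (linearizedMap Fq c))
        = Z.card := by
          rw [← Nat.card_eq_card_finite_toFinset, SetLike.coe_sort_coe,
            Module.natCard_eq_pow_finrank (K := Fq), Nat.card_eq_fintype_card]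
      _ ≤ (linearizedPoly Fq c).natDegree := card_le_degree_of_subset_roots hZ
      _ ≤ q ^ (s - 1) := natDegree_linearizedPoly_le Fq c
  have := (Nat.pow_le_pow_iff_right Fintype.one_lt_card).mp hcard
  have := i.pos
  omega

lemma finrank_ker_monicLinearizedMap_le [Finite L] {s : ℕ} (c : Fin s → L) :
    finrank Fq (LinearMap.ker (monicLinearizedMap Fq c)) ≤ s := by
  rw [monicLinearizedMap_eq_linearizedMap_snoc]
  refine Nat.lt_succ_iff.mp (finrank_ker_linearizedMap_lt fun h => one_ne_zero (α := L) ?_)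
  simpa using congrFun h (Fin.last s)

lemma exists_le_ker_monicLinearizedMap [Finite L] {s : ℕ} {U : Submodule Fq L}
    (hU : finrank Fq U = s) : ∃ c : Fin s → L, U ≤ LinearMap.ker (monicLinearizedMap Fq c) := by
  let b := Module.finBasisOfFinrankEq Fq U hU
  let u : Fin s → L := fun j => b j
  have hspan : Submodule.span Fq (Set.range u) = U := by
    rw [show Set.range u = U.subtype '' Set.range b from (Set.range_comp _ _), ← Submodule.map_span,
      b.span_eq, Submodule.map_top, Submodule.range_subtype]
  have le_ker_iff (f : L →ₗ[Fq] L) : U ≤ LinearMap.ker f ↔ ∀ j, f (u j) = 0 := by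
    simp [← hspan, Submodule.span_le, Set.range_subset_iff]
  -- the Moore matrix `(u j ^ q ^ i)` has L-linearly independent rows
  let w : Fin s → Fin s → L := fun i j => u j ^ q ^ (i : ℕ)
  have hw : LinearIndependent L w := by
    rw [Fintype.linearIndependent_iff]
    intro g hg
    by_contra! hne
    have hle : U ≤ LinearMap.ker (linearizedMap Fq g) := (le_ker_iff _).mpr fun j => by
      simpa [linearizedMap_apply, w] using congrFun hg j
    have := (Submodule.finrank_mono hle).trans_lt
      (finrank_ker_linearizedMap_lt (Function.ne_iff.mpr hne))
    omega
  have htop : (fun j => -(u j ^ q ^ s)) ∈ Submodule.span L (Set.range w) := by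
    rw [hw.span_eq_top_of_card_eq_finrank' (by simp)]
    exact Submodule.mem_top
  obtain ⟨c, hc⟩ := (Submodule.mem_span_range_iff_exists_fun L).mp htop
  refine ⟨c, (le_ker_iff _).mpr fun j => ?_⟩
  have := congrFun hc j
  simp only [Finset.sum_apply, Pi.smul_apply, smul_eq_mul, w] at this
  rw [monicLinearizedMap_apply, this, add_neg_cancel]

lemma exists_ker_monicLinearizedMap_eq [Finite L] {s : ℕ} {U : Submodule Fq L}
    (hU : finrank Fq U = s) : ∃ c : Fin s → L, LinearMap.ker (monicLinearizedMap Fq c) = U := by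
  obtain ⟨c, hc⟩ := exists_le_ker_monicLinearizedMap hU
  exact ⟨c, (Submodule.eq_of_le_of_finrank_le hc
    ((finrank_ker_monicLinearizedMap_le c).trans hU.ge)).symm⟩

lemma monicLinearizedMap_apply_eq_add {k e : ℕ} (c : Fin (k + e) → L) (x : L) :
    monicLinearizedMap Fq c x = x ^ q ^ (k + e) + ∑ i : Fin k, c (Fin.castAdd e i) * x ^ q ^ (i : ℕ)
      + ∑ i : Fin e, c (Fin.natAdd k i) * x ^ q ^ (k + (i : ℕ)) := by
  rw [monicLinearizedMap_apply, Fin.sum_univ_add, add_assoc]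
  simp

end Linearized

lemma vrank_comp_add_finrank_ker_domRestrict {Fq L : Type*} [Field Fq] [Field L] [Algebra Fq L]
    {n : ℕ} {α : Fin n → L} (hα : LinearIndependent Fq α) (f : L →ₗ[Fq] L) :
    vrank Fq (f ∘ α) +
      finrank Fq (LinearMap.ker (f.domRestrict (Submodule.span Fq (Set.range α)))) = n := by
  have := FiniteDimensional.span_of_finite Fq (Set.finite_range α)
  rw [vrank, Set.range_comp, ← Submodule.map_span, ← LinearMap.range_domRestrict,
    LinearMap.finrank_range_add_finrank_ker, finrank_span_eq_card hα, Fintype.card_fin]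

lemma natCard_codewords_of_length_zero {Fq L : Type*} [Field Fq] [Field L] [Algebra Fq L]
    (q k : ℕ) (α r : Fin 0 → L) :
    Nat.card {c : Fin 0 → L // (∃ f : Fin k → L, c = gabCodeword q α f) ∧ vrank Fq (r - c) = 0}
      = 1 := by
  refine Nat.card_eq_one_iff_exists.mpr
    ⟨⟨0, ⟨0, Subsingleton.elim _ _⟩, ?_⟩, fun c => Subtype.ext (Subsingleton.elim _ _)⟩
  rw [vrank, Set.range_eq_empty, Submodule.span_empty, finrank_bot]

lemma exists_card_le_mul_card_fiber {α β : Type*} [Finite α] [Finite β] [Nonempty β]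
    (f : α → β) : ∃ y, Nat.card α ≤ Nat.card β * Nat.card {x // f x = y} := by
  have := Fintype.ofFinite β
  obtain ⟨y, hy⟩ := Finite.exists_max fun y => Nat.card {x // f x = y}
  refine ⟨y, ?_⟩
  calc Nat.card α = Nat.card (Σ y, {x // f x = y}) :=
        (Nat.card_congr (Equiv.sigmaFiberEquiv f)).symm
    _ = ∑ y', Nat.card {x // f x = y'} := Nat.card_sigma
    _ ≤ ∑ _y', Nat.card {x // f x = y} := Finset.sum_le_sum fun y' _ => hy y'
    _ = _ := by simp [Nat.card_eq_fintype_card]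

lemma Nat.cast_prod_pow_sub_pow {R : Type*} [CommRing R] {b n s : ℕ} (hb : 1 ≤ b) (hs : s ≤ n) :
    ((∏ i : Fin s, (b ^ n - b ^ (i : ℕ)) : ℕ) : R) =
      ∏ i ∈ Finset.range s, ((b : R) ^ n - b ^ i) := by
  rw [Nat.cast_prod, Fin.prod_univ_eq_prod_range (fun i => ((b ^ n - b ^ i : ℕ) : R))]
  refine Finset.prod_congr rfl fun i hi => ?_
  rw [Nat.cast_sub (Nat.pow_le_pow_right hb (by simp at hi; omega))]
  push_cast
  rfl

section Subspaces

variable {K V : Type*} [Field K] [Fintype K] [AddCommGroup V] [Module K V] [Finite V]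

local notation "q" => Fintype.card K

def linearIndependentFiberEquiv {s : ℕ} (U : {U : Submodule K V // finrank K U = s}) :
    {t : {t : Fin s → V // LinearIndependent K t} //
        Submodule.span K (Set.range t.1) = U.1} ≃ {u : Fin s → U.1 // LinearIndependent K u} where
  toFun t := ⟨fun i => ⟨t.1.1 i, (le_of_eq t.2) (Submodule.subset_span ⟨i, rfl⟩)⟩,
    LinearIndependent.of_comp U.1.subtype t.1.2⟩
  invFun u := ⟨⟨U.1.subtype ∘ u.1, u.2.map' _ (Submodule.ker_subtype _)⟩, by
    rw [Set.range_comp, ← Submodule.map_span,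
      u.2.span_eq_top_of_card_eq_finrank' (by rw [Fintype.card_fin, U.2]), Submodule.map_top,
      Submodule.range_subtype]⟩
  left_inv t := rfl
  right_inv u := rfl

lemma card_linearIndependent_eq_card_subspaces_mul {s : ℕ} :
    Nat.card {t : Fin s → V // LinearIndependent K t} =
      Nat.card {U : Submodule K V // finrank K U = s} * ∏ i : Fin s, (q ^ s - q ^ (i : ℕ)) := by
  have := Fintype.ofFinite {U : Submodule K V // finrank K U = s}
  let span : {t : Fin s → V // LinearIndependent K t} → {U : Submodule K V // finrank K U = s} :=
    fun t => ⟨Submodule.span K (Set.range t.1), by rw [finrank_span_eq_card t.2, Fintype.card_fin]⟩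
  calc Nat.card {t : Fin s → V // LinearIndependent K t}
      = ∑ U, Nat.card {t // span t = U} :=
        (Nat.card_congr (Equiv.sigmaFiberEquiv span)).symm.trans Nat.card_sigma
    _ = ∑ U : {U : Submodule K V // finrank K U = s}, ∏ i : Fin s, (q ^ s - q ^ (i : ℕ)) := by
        refine Finset.sum_congr rfl fun U _ => ?_
        rw [Nat.card_congr ((Equiv.subtypeEquivRight fun t => by simp [span, Subtype.ext_iff]).trans
          (linearIndependentFiberEquiv U)), card_linearIndependent U.2.ge, U.2]
    _ = _ := by simp [Nat.card_eq_fintype_card]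

lemma card_subspaces_eq_prod_div {s : ℕ} (hs : s ≤ finrank K V) :
    (Nat.card {U : Submodule K V // finrank K U = s} : ℚ) =
      ∏ i ∈ Finset.range s, ((q : ℚ) ^ finrank K V - q ^ i) / ((q : ℚ) ^ s - q ^ i) := by
  have h := congrArg (Nat.cast (R := ℚ))
    (card_linearIndependent_eq_card_subspaces_mul (K := K) (V := V) (s := s))
  rw [card_linearIndependent hs, Nat.cast_mul, Nat.cast_prod_pow_sub_pow Fintype.card_pos hs,
    Nat.cast_prod_pow_sub_pow Fintype.card_pos le_rfl] at h
  have hq : (1 : ℚ) < q := by exact_mod_cast Fintype.one_lt_card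
  rw [Finset.prod_div_distrib, h, mul_div_cancel_right₀]
  exact Finset.prod_ne_zero_iff.mpr fun i hi =>
    sub_ne_zero.mpr (pow_lt_pow_right₀ hq (Finset.mem_range.mp hi)).ne'

end Subspaces

section ListSize

variable {Fq L : Type*} [Field Fq] [Fintype Fq] [Field L] [Algebra Fq L] [Finite L]

local notation "q" => Fintype.card Fq

lemma exists_card_subspaces_le_mul_card_list {k e τ : ℕ} {α : Fin (k + e + τ) → L}
    (hα : LinearIndependent Fq α) :
    ∃ r : Fin (k + e + τ) → L,
      Nat.card {U : Submodule Fq (Submodule.span Fq (Set.range α)) // finrank Fq U = k + e} ≤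
        Nat.card L ^ e * Nat.card {c : Fin (k + e + τ) → L //
          (∃ f : Fin k → L, c = gabCodeword q α f) ∧ vrank Fq (r - c) = τ} := by
  set A := Submodule.span Fq (Set.range α)
  choose a ha using fun U : {U : Submodule Fq A // finrank Fq U = k + e} =>
    exists_ker_monicLinearizedMap_eq (Fq := Fq)
      (((Submodule.equivMapOfInjective _ A.injective_subtype U.1).finrank_eq).symm.trans U.2)
  have hker (U) : LinearMap.ker ((monicLinearizedMap Fq (a U)).domRestrict A) = U.1 := by
    rw [LinearMap.ker_domRestrict, ha, Submodule.comap_map_eq_of_injective A.injective_subtype]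
  obtain ⟨g, hg⟩ := exists_card_le_mul_card_fiber fun U i => a U (Fin.natAdd k i)
  rw [Nat.card_fun, Nat.card_eq_fintype_card (α := Fin e), Fintype.card_fin] at hg
  let r : Fin (k + e + τ) → L := fun j => α j ^ q ^ (k + e) + ∑ i, g i * α j ^ q ^ (k + (i : ℕ))
  let codeword (U) : Fin (k + e + τ) → L := gabCodeword q α fun i => -a U (Fin.castAdd e i)
  have hres (U) (hU : (fun i => a U (Fin.natAdd k i)) = g) :
      r - codeword U = monicLinearizedMap Fq (a U) ∘ α := by
    subst hU
    ext j
    simp only [Pi.sub_apply, gabCodeword, neg_mul, Finset.sum_neg_distrib, sub_neg_eq_add,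
      Function.comp_apply, monicLinearizedMap_apply_eq_add, r, codeword]
    ring
  refine ⟨r, hg.trans (Nat.mul_le_mul_left _ (Nat.card_le_card_of_injective
    (fun U => ⟨codeword U, ⟨_, rfl⟩, ?_⟩) ?_))⟩
  · have := vrank_comp_add_finrank_ker_domRestrict hα (monicLinearizedMap Fq (a U.1))
    rw [hker, U.1.2, ← hres U.1 U.2] at this
    omega
  · intro U U' h
    have hα_eq : monicLinearizedMap Fq (a U.1) ∘ α = monicLinearizedMap Fq (a U'.1) ∘ α := by
      rw [← hres _ U.2, ← hres _ U'.2,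
        show codeword U.1 = codeword U'.1 from congrArg Subtype.val h]
    have hA : (monicLinearizedMap Fq (a U.1)).domRestrict A =
        (monicLinearizedMap Fq (a U'.1)).domRestrict A :=
      LinearMap.ext fun x => LinearMap.eqOn_span' (Set.forall_mem_range.mpr (congrFun hα_eq)) x.2
    exact Subtype.ext (Subtype.ext (by rw [← hker, hA, hker]))

end ListSize

lemma pow_mul_le_prod_div {R : Type*} [Field R] [LinearOrder R] [IsStrictOrderedRing R]
    {x : R} (hx : 1 < x) (s τ : ℕ) :
    x ^ (τ * s) ≤ ∏ i ∈ Finset.range s, (x ^ (s + τ) - x ^ i) / (x ^ s - x ^ i) := by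
  rw [show x ^ (τ * s) = ∏ _i ∈ Finset.range s, x ^ τ by
    rw [Finset.prod_const, Finset.card_range, pow_mul]]
  refine Finset.prod_le_prod (fun _ _ => by positivity) fun i hi => ?_
  have hxi : x ^ i < x ^ s := pow_lt_pow_right₀ hx (Finset.mem_range.mp hi)
  rw [le_div_iff₀ (sub_pos.mpr hxi), mul_sub, ← pow_add, add_comm τ]
  nlinarith [one_le_pow₀ (n := τ) hx.le, pow_pos (zero_lt_one.trans hx) i]

/-- Bound I: lower bound on the list size of Gabidulin codes. For `Gab[n,k]` over `F_{q^m}`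
with `n ≤ m` and `d = n - k + 1`, and any `τ < d`, there is a word `r ∈ F_{q^m}^n` such that
the number of codewords at rank distance exactly `τ` from `r` is at least
`[n choose n-τ]_q / (q^m)^{n-τ-k} ≥ q^m · q^{τ(m+n) - τ² - md}`. -/
theorem gabidulin_list_size_lower_bound
    {Fq L : Type*} [Field Fq] [Fintype Fq] [Field L] [Algebra Fq L]
    {q m n k d τ : ℕ} (hq : q = Fintype.card Fq) (hm : Module.finrank Fq L = m)
    (hnm : n ≤ m) (hk : k ≤ n) (hd : d = n - k + 1) (hτ : τ < d)
    (α : Fin n → L) (hα : LinearIndependent Fq α) :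
    ∃ r : Fin n → L,
      (∏ i ∈ Finset.range (n - τ), ((q : ℚ) ^ n - (q : ℚ) ^ i) / ((q : ℚ) ^ (n - τ) - (q : ℚ) ^ i))
          / ((q : ℚ) ^ m) ^ (n - τ - k) ≤
        (Nat.card {c : Fin n → L //
            (∃ f : Fin k → L, c = gabCodeword q α f) ∧ vrank Fq (r - c) = τ} : ℚ) ∧
      (q : ℚ) ^ m * (q : ℚ) ^ (τ * (m + n)) / ((q : ℚ) ^ (τ ^ 2) * (q : ℚ) ^ (m * d)) ≤
        (Nat.card {c : Fin n → L //
            (∃ f : Fin k → L, c = gabCodeword q α f) ∧ vrank Fq (r - c) = τ} : ℚ) := by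
  subst hq
  -- for `n = 0` the field `L` may be infinite (with `finrank = 0`), so it is settled directly
  rcases Nat.eq_zero_or_pos n with rfl | hn
  · obtain rfl : τ = 0 := by omega
    refine ⟨0, ?_, ?_⟩ <;> rw [natCard_codewords_of_length_zero] <;> simp [hd]
  have : FiniteDimensional Fq L := .of_finrank_pos (by omega)
  have : Finite L := Module.finite_of_finite Fq
  obtain ⟨e, rfl⟩ : ∃ e, n = k + e + τ := ⟨n - τ - k, by omega⟩
  subst hd
  rw [show k + e + τ - τ = k + e by omega, show k + e - k = e by omega,
    show k + e + τ - k + 1 = e + τ + 1 by omega]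
  obtain ⟨r, hr⟩ := exists_card_subspaces_le_mul_card_list hα
  rw [Module.natCard_eq_pow_finrank (K := Fq) (V := L), hm,
    Nat.card_eq_fintype_card (α := Fq)] at hr
  have hsub := card_subspaces_eq_prod_div (K := Fq) (s := k + e)
    (V := Submodule.span Fq (Set.range α)) (by rw [finrank_span_eq_card hα]; simp)
  rw [finrank_span_eq_card hα, Fintype.card_fin] at hsub
  have hq : (1 : ℚ) < Fintype.card Fq := by exact_mod_cast Fintype.one_lt_card
  have hpos : (0 : ℚ) < ((Fintype.card Fq : ℚ) ^ m) ^ e := by positivity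
  replace hr := (Nat.cast_le (α := ℚ)).mpr hr
  push_cast at hr
  have hlist := (div_le_iff₀' hpos).mpr hr
  rw [hsub] at hlist
  refine ⟨r, hlist, le_trans (le_of_eq ?_) ((div_le_div_of_nonneg_right
    (pow_mul_le_prod_div hq (k + e) τ) hpos.le).trans hlist)⟩
  rw [div_eq_div_iff (by positivity) hpos.ne']
  ring
end

section
/- Wang–Xing–Safavi-Naini (anticode) bound: any set of t-dimensional subspaces of F_q^n with pairwise subspace distance at least 2δ has cardinality at most [n choose t−δ+1]_q / [t choose t−δ+1]_q. -/
/-- The Gaussian binomial coefficient `[n choose r]_q` as a rational number. -/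
def gaussBinomQ (q n r : ℕ) : ℚ :=
  ∏ i ∈ Finset.range r, ((q : ℚ) ^ n - (q : ℚ) ^ i) / ((q : ℚ) ^ r - (q : ℚ) ^ i)

open Module Submodule Finset

theorem cast_prod_pow_sub_pow {q m s : ℕ} (hq : 1 ≤ q) (hs : s ≤ m) :
    ((∏ i ∈ range s, (q ^ m - q ^ i) : ℕ) : ℚ) =
      ∏ i ∈ range s, ((q : ℚ) ^ m - (q : ℚ) ^ i) := by
  push_cast
  refine prod_congr rfl fun i hi => ?_
  rw [Nat.cast_sub (Nat.pow_le_pow_right hq ((mem_range.mp hi).le.trans hs))]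
  push_cast
  rfl

theorem prod_pow_sub_pow_pos {q m s : ℕ} (hq : 1 < q) (hs : s ≤ m) :
    0 < ∏ i ∈ range s, ((q : ℚ) ^ m - (q : ℚ) ^ i) :=
  prod_pos fun i hi => sub_pos.mpr
    (pow_lt_pow_right₀ (by exact_mod_cast hq) ((mem_range.mp hi).trans_le hs))

theorem gaussBinomQ_pos {q m s : ℕ} (hq : 1 < q) (hs : s ≤ m) : 0 < gaussBinomQ q m s := by
  rw [gaussBinomQ, prod_div_distrib]
  exact div_pos (prod_pow_sub_pow_pos hq hs) (prod_pow_sub_pow_pos hq le_rfl)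

section Subspaces

variable {F : Type*} [Field F] {V : Type*} [AddCommGroup V] [Module F V]

theorem finrank_inf_add_le_of_le_subspaceDist [FiniteDimensional F V] {U U' : Submodule F V}
    {t δ : ℕ} (hU : finrank F U = t) (hU' : finrank F U' = t)
    (h : 2 * δ ≤ subspaceDist U U') :
    finrank F ↥(U ⊓ U') + δ ≤ t := by
  have hsum : finrank F ↥(U ⊔ U') + finrank F ↥(U ⊓ U') = t + t :=
    (finrank_sup_add_finrank_inf_eq U U').trans (by rw [hU, hU'])
  have hinf : finrank F ↥(U ⊓ U') ≤ t := hU ▸ finrank_mono inf_le_left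
  unfold subspaceDist at h
  omega

def spanOfLinearIndependent (s : ℕ) :
    {f : Fin s → V // LinearIndependent F f} → {W : Submodule F V // finrank F W = s} :=
  fun f => ⟨span F (Set.range f.1), by rw [finrank_span_eq_card f.2, Fintype.card_fin]⟩

theorem span_range_eq_of_linearIndependent {s : ℕ} {W : Submodule F V} [FiniteDimensional F W]
    (hW : finrank F W = s) {g : Fin s → W} (hg : LinearIndependent F g) :
    span F (Set.range fun i => (g i : V)) = W := by
  refine eq_of_le_of_finrank_le ?_ (le_of_eq ?_)
  · rw [span_le]
    rintro _ ⟨i, rfl⟩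
    exact (g i).2
  · have hg' : LinearIndependent F fun i => (g i : V) := hg.map' W.subtype (ker_subtype W)
    rw [finrank_span_eq_card hg', Fintype.card_fin, hW]

def spanOfLinearIndependentFiberEquiv [FiniteDimensional F V] {s : ℕ}
    (W : {W : Submodule F V // finrank F W = s}) :
    {f // spanOfLinearIndependent s f = W} ≃ {g : Fin s → W.1 // LinearIndependent F g} where
  toFun f := ⟨fun i => ⟨f.1.1 i, congrArg Subtype.val f.2 ▸ subset_span ⟨i, rfl⟩⟩,
    LinearIndependent.of_comp W.1.subtype f.1.2⟩
  invFun g := ⟨⟨fun i => (g.1 i : V), g.2.map' W.1.subtype (ker_subtype W.1)⟩,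
    Subtype.ext (span_range_eq_of_linearIndependent W.2 g.2)⟩
  left_inv _ := rfl
  right_inv _ := rfl

variable [Finite V]

theorem sum_card_finrank_le_of_finrank_inf_lt {s : ℕ} (A : Finset (Submodule F V))
    (hA : ∀ U ∈ A, ∀ U' ∈ A, U ≠ U' → finrank F ↥(U ⊓ U') < s) :
    ∑ U ∈ A, Nat.card {W : Submodule F U // finrank F W = s} ≤
      Nat.card {W : Submodule F V // finrank F W = s} := by
  let ι : (Σ U : A, {W : Submodule F U // finrank F W = s}) →
      {W : Submodule F V // finrank F W = s} :=
    fun p => ⟨p.2.1.map p.1.1.subtype, (finrank_map_subtype_eq _ _).trans p.2.2⟩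
  have hι : Function.Injective ι := by
    rintro ⟨U, W, hW⟩ ⟨U', W', _⟩ h
    have hmap : W.map U.1.subtype = W'.map U'.1.subtype := congrArg Subtype.val h
    obtain rfl : U = U' := by
      by_contra hne
      have hle : W.map U.1.subtype ≤ U.1 ⊓ U'.1 :=
        le_inf (map_subtype_le _ _) (hmap ▸ map_subtype_le _ _)
      have := finrank_mono hle
      rw [finrank_map_subtype_eq, hW] at this
      exact (hA _ U.2 _ U'.2 (Subtype.coe_injective.ne hne)).not_ge this
    obtain rfl := map_injective_of_injective (injective_subtype _) hmap
    rfl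
  rw [← sum_coe_sort, ← Nat.card_sigma]
  exact Nat.card_le_card_of_injective ι hι

variable [Fintype F]

theorem card_finrank_eq_mul_prod {s : ℕ} (hs : s ≤ finrank F V) :
    Nat.card {W : Submodule F V // finrank F W = s} *
        ∏ i ∈ range s, (Fintype.card F ^ s - Fintype.card F ^ i) =
      ∏ i ∈ range s, (Fintype.card F ^ finrank F V - Fintype.card F ^ i) := by
  -- both sides count the linearly independent `s`-tuples of `V`, grouped by their span
  have := Fintype.ofFinite {W : Submodule F V // finrank F W = s}
  have hfiber (W : {W : Submodule F V // finrank F W = s}) :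
      Nat.card {f // spanOfLinearIndependent s f = W} =
        ∏ i ∈ range s, (Fintype.card F ^ s - Fintype.card F ^ i) := by
    rw [Nat.card_congr (spanOfLinearIndependentFiberEquiv W),
      card_linearIndependent (W.2.symm ▸ le_rfl), W.2]
    exact Fin.prod_univ_eq_prod_range (fun i => Fintype.card F ^ s - Fintype.card F ^ i) s
  have hcount := card_linearIndependent (K := F) hs
  rw [Fin.prod_univ_eq_prod_range
    (fun i => Fintype.card F ^ finrank F V - Fintype.card F ^ i)] at hcount
  rw [← hcount, ← Nat.card_congr (Equiv.sigmaFiberEquiv (spanOfLinearIndependent s)),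
    Nat.card_sigma, sum_congr rfl fun W _ => hfiber W, sum_const, card_univ, smul_eq_mul,
    Nat.card_eq_fintype_card (α := {W : Submodule F V // finrank F W = s})]

theorem natCard_finrank_eq_gaussBinomQ {s : ℕ} (hs : s ≤ finrank F V) :
    (Nat.card {W : Submodule F V // finrank F W = s} : ℚ) =
      gaussBinomQ (Fintype.card F) (finrank F V) s := by
  have hq : 1 < Fintype.card F := Fintype.one_lt_card
  rw [gaussBinomQ, prod_div_distrib, eq_div_iff (prod_pow_sub_pow_pos hq le_rfl).ne',
    ← cast_prod_pow_sub_pow hq.le le_rfl, ← cast_prod_pow_sub_pow hq.le hs]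
  exact_mod_cast card_finrank_eq_mul_prod hs

end Subspaces

/-- Wang–Xing–Safavi-Naini (anticode) bound: any set of `t`-dimensional subspaces of `F_q^n`
with pairwise subspace distance at least `2δ` has cardinality at most
`[n choose t-δ+1]_q / [t choose t-δ+1]_q`. -/
theorem anticode_bound {F : Type*} [Field F] [Fintype F] {q n t δ : ℕ}
    (hq : q = Fintype.card F) (hδ1 : 1 ≤ δ) (hδt : δ ≤ t) (htn : t ≤ n)
    (A : Finset (Submodule F (Fin n → F)))
    (hdim : ∀ U ∈ A, Module.finrank F ↥U = t)
    (hdist : ∀ U ∈ A, ∀ V ∈ A, U ≠ V → 2 * δ ≤ subspaceDist U V) :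
    (A.card : ℚ) ≤ gaussBinomQ q n (t - δ + 1) / gaussBinomQ q t (t - δ + 1) := by
  subst hq
  have hst : t - δ + 1 ≤ t := by omega
  have hinf : ∀ U ∈ A, ∀ U' ∈ A, U ≠ U' → finrank F ↥(U ⊓ U') < t - δ + 1 :=
    fun U hU U' hU' hne => by
      have := finrank_inf_add_le_of_le_subspaceDist (hdim U hU) (hdim U' hU')
        (hdist U hU U' hU' hne)
      omega
  rw [le_div_iff₀ (gaussBinomQ_pos Fintype.one_lt_card hst)]
  calc (A.card : ℚ) * gaussBinomQ (Fintype.card F) t (t - δ + 1)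
      = ∑ U ∈ A, (Nat.card {W : Submodule F U // finrank F W = t - δ + 1} : ℚ) := by
        rw [sum_congr rfl fun U hU => hdim U hU ▸ natCard_finrank_eq_gaussBinomQ
          ((hdim U hU).symm ▸ hst), sum_const, nsmul_eq_mul]
    _ ≤ Nat.card {W : Submodule F (Fin n → F) // finrank F W = t - δ + 1} := by
        exact_mod_cast sum_card_finrank_le_of_finrank_inf_lt A hinf
    _ = gaussBinomQ (Fintype.card F) n (t - δ + 1) := by
        rw [natCard_finrank_eq_gaussBinomQ (by rw [finrank_fin_fun]; omega), finrank_fin_fun]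
end

section
/- Special case τ = ⌊(d−1)/2⌋ + 1: For n ≤ m, τ = ⌊(d−1)/2⌋ + 1 (and d ≤ n−1 if d is odd), there exists a rank-metric code C over F_{q^m} of length n with minimum rank distance at least d, and a word r, such that the ball of rank radius τ around r contains at least q^{n−τ} codewords of C. -/
/-!
Fix a field `F` of degree `s = n - τ ≥ τ` over `F_q`, an injection `e : F_q^τ → F` and a
surjection `π : F → F_q^τ`. For `a ∈ F` the codeword is the endomorphism of `D = F_q^τ × F`
sending `(w, x)` to `(u, a • e u)` with `u = w - π (a x)`, read off on a basis of `D`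
embedded in `F_{q^m}`. It factors through `F_q^τ`, so it lies in the rank ball of radius `τ`
around `0`. For `a ≠ b` the graphs `u ↦ (u, a • e u)` and `u ↦ (u, b • e u)` meet only in `0`,
so the kernel of the difference of the codewords is the intersection of the kernels of the two
shears, which embeds into the kernel of `x ↦ π ((a - b) x)`, of dimension `s - τ`. Hence the difference has
rank at least `2τ ≥ d`, and the `q^s` elements of `F` give distinct codewords.
-/

open Module LinearMap

theorem exists_injective_of_finrank_le {K V W : Type*} [Field K] [AddCommGroup V] [Module K V]
    [AddCommGroup W] [Module K W] [FiniteDimensional K V] [FiniteDimensional K W]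
    (h : finrank K V ≤ finrank K W) : ∃ f : V →ₗ[K] W, Function.Injective f :=
  ⟨(finBasis K V).constr K (finBasis K W ∘ Fin.castLE h),
    (finBasis K V).injective_constr_of_linearIndependent
      ((finBasis K W).linearIndependent.comp _ (Fin.castLE_injective h))⟩

theorem ker_comp_sub_comp_eq_inf_of_disjoint {K D W E : Type*} [Ring K]
    [AddCommGroup D] [Module K D] [AddCommGroup W] [Module K W] [AddCommGroup E] [Module K E]
    {G G' : W →ₗ[K] E} (hG : Function.Injective G) (hG' : Function.Injective G')
    (hGG' : Disjoint (range G) (range G')) (P P' : D →ₗ[K] W) :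
    ker (G ∘ₗ P - G' ∘ₗ P') = ker P ⊓ ker P' := by
  ext z
  simp only [Submodule.mem_inf, mem_ker, LinearMap.sub_apply, comp_apply, sub_eq_zero]
  constructor
  · intro h
    have h0 : G (P z) = 0 :=
      (Submodule.disjoint_def.mp hGG') _ (mem_range_self G _) (h ▸ mem_range_self G' _)
    exact ⟨(map_eq_zero_iff G hG).mp h0, (map_eq_zero_iff G' hG').mp (h ▸ h0)⟩
  · rintro ⟨h, h'⟩
    rw [h, h', map_zero, map_zero]

theorem vrank_comp_basis {K L D E : Type*} [Field K] [Field L] [Algebra K L]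
    [AddCommGroup D] [Module K D] [AddCommGroup E] [Module K E] {n : ℕ}
    (b : Basis (Fin n) K D) {ι : E →ₗ[K] L} (hι : Function.Injective ι) (f : D →ₗ[K] E) :
    vrank K (fun i => ι (f (b i))) = finrank K (range f) := by
  have hrange : Set.range (fun i => ι (f (b i))) = (ι ∘ₗ f) '' Set.range b := by
    rw [← Set.range_comp]; rfl
  rw [vrank, hrange, Submodule.span_image, b.span_eq, Submodule.map_top, range_comp]
  exact (Submodule.equivMapOfInjective ι hι _).finrank_eq.symm

namespace SpreadCode

variable {K F W : Type*} [Field K] [Field F] [Algebra K F] [AddCommGroup W] [Module K W]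

def graphMap (e : W →ₗ[K] F) (a : F) : W →ₗ[K] W × F :=
  LinearMap.id.prod (mulLeft K a ∘ₗ e)

def shearProj (π : F →ₗ[K] W) (a : F) : W × F →ₗ[K] W :=
  fst K W F - π ∘ₗ mulLeft K a ∘ₗ snd K W F

def codeMap (e : W →ₗ[K] F) (π : F →ₗ[K] W) (a : F) : W × F →ₗ[K] W × F :=
  graphMap e a ∘ₗ shearProj π a

theorem graphMap_injective (e : W →ₗ[K] F) (a : F) : Function.Injective (graphMap e a) :=
  fun _ _ h => congrArg Prod.fst h

theorem disjoint_range_graphMap {e : W →ₗ[K] F} (he : Function.Injective e) {a b : F}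
    (hab : a ≠ b) : Disjoint (range (graphMap e a)) (range (graphMap e b)) := by
  rw [Submodule.disjoint_def]
  intro z hza hzb
  obtain ⟨w, rfl⟩ := mem_range.mp hza
  obtain ⟨w', hw'⟩ := mem_range.mp hzb
  have hww : w' = w := congrArg Prod.fst hw'
  have hw : b * e w = a * e w := hww ▸ congrArg Prod.snd hw'
  have hw0 : e w = 0 := by
    refine (mul_eq_zero.mp ?_).resolve_left (sub_ne_zero.mpr hab.symm)
    rw [sub_mul, hw, sub_self]
  rw [show w = 0 from he (hw0.trans e.map_zero.symm), map_zero]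

theorem finrank_range_codeMap_le [FiniteDimensional K W] (e : W →ₗ[K] F) (π : F →ₗ[K] W)
    (a : F) : finrank K (range (codeMap e π a)) ≤ finrank K W :=
  (Submodule.finrank_mono (range_comp_le_range _ _)).trans (finrank_range_le _)

theorem ker_shearProj_inf_le (π : F →ₗ[K] W) (a b : F) :
    ker (shearProj π a) ⊓ ker (shearProj π b) ≤
      (ker (π ∘ₗ mulLeft K (a - b))).map ((π ∘ₗ mulLeft K a).prod LinearMap.id) := by
  rintro ⟨w, x⟩ hz
  obtain ⟨ha, hb⟩ := Submodule.mem_inf.mp hz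
  simp only [mem_ker, shearProj, LinearMap.sub_apply, comp_apply, fst_apply, snd_apply,
    mulLeft_apply, sub_eq_zero] at ha hb
  refine ⟨x, ?_, ?_⟩
  · simp [sub_mul, ← ha, ← hb]
  · simp [ha]

theorem finrank_ker_shearProj_inf_add_le [FiniteDimensional K F] [FiniteDimensional K W]
    {π : F →ₗ[K] W} (hπ : Function.Surjective π) {a b : F} (hab : a ≠ b) :
    finrank K ↥(ker (shearProj π a) ⊓ ker (shearProj π b)) + finrank K W ≤ finrank K F := by
  have hψ : Function.Surjective (π ∘ₗ mulLeft K (a - b)) := by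
    refine hπ.comp fun x => ⟨(a - b)⁻¹ * x, ?_⟩
    simp [← mul_assoc, mul_inv_cancel₀ (sub_ne_zero.mpr hab)]
  have hrn := finrank_range_add_finrank_ker (π ∘ₗ mulLeft K (a - b))
  rw [range_eq_top.mpr hψ, finrank_top] at hrn
  have := (Submodule.finrank_mono (ker_shearProj_inf_le π a b)).trans
    (Submodule.finrank_map_le _ _)
  omega

theorem le_finrank_range_codeMap_sub [FiniteDimensional K F] [FiniteDimensional K W]
    {e : W →ₗ[K] F} (he : Function.Injective e) {π : F →ₗ[K] W} (hπ : Function.Surjective π)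
    {a b : F} (hab : a ≠ b) :
    2 * finrank K W ≤ finrank K (range (codeMap e π a - codeMap e π b)) := by
  have hker : ker (codeMap e π a - codeMap e π b) = ker (shearProj π a) ⊓ ker (shearProj π b) :=
    ker_comp_sub_comp_eq_inf_of_disjoint (graphMap_injective e a) (graphMap_injective e b)
      (disjoint_range_graphMap he hab) (shearProj π a) (shearProj π b)
  have hrn := finrank_range_add_finrank_ker (codeMap e π a - codeMap e π b)
  rw [hker, finrank_prod] at hrn
  have := finrank_ker_shearProj_inf_add_le hπ hab
  omega

end SpreadCode

theorem vrank_zero (K : Type*) [Field K] {L : Type*} [Field L] [Algebra K L] {n : ℕ} :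
    vrank K (0 : Fin n → L) = 0 := by
  have hspan : Submodule.span K (Set.range (0 : Fin n → L)) = ⊥ :=
    Submodule.span_eq_bot.mpr fun _ ⟨_, hi⟩ => hi.symm
  rw [vrank, hspan, finrank_bot]

open SpreadCode in
theorem exists_injective_code_of_finrank {K L F : Type*} [Field K] [Field L] [Algebra K L]
    [Field F] [Algebra K F] [FiniteDimensional K F] [FiniteDimensional K L] {n τ : ℕ}
    (hτ : 0 < τ) (hτF : τ ≤ finrank K F) (hn : τ + finrank K F = n) (hnL : n ≤ finrank K L) :
    ∃ c : F → Fin n → L, Function.Injective c ∧ (∀ a, vrank K (-c a) ≤ τ) ∧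
      ∀ a b, a ≠ b → 2 * τ ≤ vrank K (c a - c b) := by
  obtain ⟨e, he⟩ := exists_injective_of_finrank_le (K := K) (V := Fin τ → K) (W := F)
    (by rwa [finrank_fin_fun])
  obtain ⟨π, hπe⟩ := e.exists_leftInverse_of_injective (ker_eq_bot.mpr he)
  have hπ : Function.Surjective π := fun w => ⟨e w, LinearMap.congr_fun hπe w⟩
  have hD : finrank K ((Fin τ → K) × F) = n := by rw [finrank_prod, finrank_fin_fun, hn]
  let bD := (finBasis K ((Fin τ → K) × F)).reindex (finCongr hD)
  obtain ⟨ι, hι⟩ := exists_injective_of_finrank_le (K := K) (V := (Fin τ → K) × F) (W := L)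
    (hD ▸ hnL)
  let c : F → Fin n → L := fun a i => ι (codeMap e π a (bD i))
  have hdist : ∀ a b, a ≠ b → 2 * τ ≤ vrank K (c a - c b) := by
    intro a b hab
    have hcab : c a - c b = fun i => ι ((codeMap e π a - codeMap e π b) (bD i)) := by
      funext i; simp [c]
    rw [hcab, vrank_comp_basis bD hι]
    simpa [finrank_fin_fun] using le_finrank_range_codeMap_sub he hπ hab
  refine ⟨c, fun a b hcab => ?_, fun a => ?_, hdist⟩
  · by_contra hab
    have := hdist a b hab
    rw [hcab, sub_self, vrank_zero] at this
    omega
  · have hca : -c a = fun i => ι ((-codeMap e π a) (bD i)) := by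
      funext i; simp [c]
    rw [hca, vrank_comp_basis bD hι, range_neg]
    simpa [finrank_fin_fun] using finrank_range_codeMap_le e π a

/-- Special case `τ = ⌊(d-1)/2⌋ + 1`: for `n ≤ m` (and `d ≤ n - 1` when `d` is odd), there
exists a rank-metric code `C ⊆ F_{q^m}^n` with minimum rank distance at least `d` and a
word `r` such that the ball of rank radius `τ` around `r` contains at least `q^{n-τ}`
codewords of `C`. -/
theorem list_size_lower_bound_half_dist_plus_one
    {Fq L : Type*} [Field Fq] [Fintype Fq] [Field L] [Algebra Fq L]
    {q m n d τ : ℕ} (hq : q = Fintype.card Fq) (hm : Module.finrank Fq L = m)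
    (hnm : n ≤ m) (hd0 : 0 < d) (hdn : d ≤ n) (hodd : Odd d → d ≤ n - 1)
    (hτ : τ = (d - 1) / 2 + 1) :
    ∃ C : Set (Fin n → L),
      (∀ c₁ ∈ C, ∀ c₂ ∈ C, c₁ ≠ c₂ → d ≤ vrank Fq (c₁ - c₂)) ∧
      ∃ r : Fin n → L,
        q ^ (n - τ) ≤ Nat.card {c : Fin n → L // c ∈ C ∧ vrank Fq (r - c) ≤ τ} := by
  have hd2τ : d ≤ 2 * τ := by omega
  have h2τn : 2 * τ ≤ n := by
    rcases Nat.even_or_odd d with ⟨k, rfl⟩ | hd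
    · omega
    · have := hodd hd; omega
  obtain ⟨p, _⟩ := CharP.exists Fq
  have := Fact.mk (CharP.char_is_prime Fq p)
  have : NeZero (n - τ) := ⟨by omega⟩
  have : FiniteDimensional Fq L := Module.finite_of_finrank_pos (by omega)
  have : Finite L := Module.finite_of_finite Fq
  obtain ⟨c, hc, hball, hdist⟩ := exists_injective_code_of_finrank
    (F := FiniteField.Extension Fq p (n - τ)) (L := L) (n := n) (τ := τ) (by omega)
    (by rw [FiniteField.finrank_extension]; omega) (by rw [FiniteField.finrank_extension]; omega)
    (hm ▸ hnm)
  refine ⟨Set.range c, ?_, 0, ?_⟩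
  · rintro _ ⟨a, rfl⟩ _ ⟨b, rfl⟩ hab
    exact hd2τ.trans (hdist a b (ne_of_apply_ne c hab))
  · calc q ^ (n - τ) = Nat.card (FiniteField.Extension Fq p (n - τ)) := by
          rw [FiniteField.natCard_extension, hq, Nat.card_eq_fintype_card]
      _ ≤ _ := Nat.card_le_card_of_injective
          (fun a => ⟨c a, ⟨a, rfl⟩, by rw [zero_sub]; exact hball a⟩)
          (fun a b h => hc (congrArg Subtype.val h))
end
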